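/- The quadratic ψ₀(q) = 3q − 2q² satisfies ψ₀(q) ≥ h(q) for all q ∈ [0,1], where h(q) = 1 for q > 1/2, h(1/2) = 1/2, and h(q) = 0 for q < 1/2. Consequently, for every probability measure π on [0,1] with first moment μ and second moment ν, V_∞(π) = π((1/2,1]) + (1/2)π({1/2}) ≤ min{1, 3μ − 2ν}. Moreover, for every feasible (μ,ν) with μ > 1/2 or ν > μ/2, this bound is sharp: min{1, 3μ − 2ν} is the supremum of V_∞ over all probability measures on [0,1] with these two moments. -/

import Mathlib

open MeasureTheory

/-- The threshold function: `h(q) = 1` for `q > 1/2`, `h(1/2) = 1/2`, `h(q) = 0` for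
`q < 1/2`. -/
noncomputable def hthr (q : ℝ) : ℝ := if 1 / 2 < q then 1 else if q = 1 / 2 then 1 / 2 else 0

/-- The infinite-vote endpoint `V_∞(π) = π((1/2, 1]) + (1/2) π({1/2})`. -/
noncomputable def Vinf (π : Measure ℝ) : ℝ :=
  (π (Set.Ioc (1 / 2 : ℝ) 1)).toReal + (1 / 2) * (π {(1 / 2 : ℝ)}).toReal

/-- The two-moment class `M(μ,ν)`: probability measures on `[0,1]` with first moment `μ`
and second moment `ν`. -/
def momentClass (μ ν : ℝ) : Set (Measure ℝ) :=
  {π | IsProbabilityMeasure π ∧ π ((Set.Icc (0 : ℝ) 1)ᶜ) = 0 ∧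
    (∫ q, q ∂π) = μ ∧ (∫ q, q ^ 2 ∂π) = ν}

/-! On `[0,1]` the threshold `h` lies below both `1` and `ψ₀(q) = 3q − 2q²`, and for `π`
carried by `[0,1]` we have `V_∞(π) = ∫ h dπ`, so integrating gives `V_∞(π) ≤ min 1 (3μ − 2ν)`.
For sharpness, the probability measure on `{0, t, 1}` with `t ∈ (1/2, 1)` and moments `(μ, ν)`
has `V_∞ = μ + (μ − ν)/t`. If `3μ − 2ν > 1`, taking `t = (μ − ν)/(1 − μ)` empties the atom at `0`
and `V_∞ = 1`; otherwise `V_∞ → 3μ − 2ν` as `t ↓ 1/2`. -/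

open Set Filter Topology

lemma MeasureTheory.Integrable.of_ae_mem_isCompact {X E : Type*} [TopologicalSpace X]
    [MeasurableSpace X] [OpensMeasurableSpace X] [T2Space X] [NormedAddCommGroup E]
    {π : Measure X} [IsFiniteMeasure π] {s : Set X} (hs : IsCompact s) (hπ : ∀ᵐ x ∂π, x ∈ s)
    {f : X → E} (hf : Continuous f) : Integrable f π := by
  rw [← Measure.restrict_eq_self_of_ae_mem hπ]
  exact hf.continuousOn.integrableOn_compact hs

lemma hthr_le_three_mul_sub_two_mul_sq {q : ℝ} (hq : q ∈ Icc (0 : ℝ) 1) :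
    hthr q ≤ 3 * q - 2 * q ^ 2 := by
  obtain ⟨h0, h1⟩ := hq
  unfold hthr
  split_ifs with _ heq
  · nlinarith
  · subst heq; norm_num
  · nlinarith

lemma hthr_of_half_lt {q : ℝ} (hq : 1 / 2 < q) : hthr q = 1 := if_pos hq

lemma hthr_of_lt_half {q : ℝ} (hq : q < 1 / 2) : hthr q = 0 := by
  rw [hthr, if_neg hq.not_gt, if_neg hq.ne]

lemma hthr_nonneg (q : ℝ) : 0 ≤ hthr q := by
  unfold hthr; split_ifs <;> norm_num

lemma hthr_le_one (q : ℝ) : hthr q ≤ 1 := by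
  unfold hthr; split_ifs <;> norm_num

lemma hthr_eq_indicator (q : ℝ) :
    hthr q = (Ioi (1 / 2 : ℝ)).indicator (fun _ ↦ 1) q
      + ({1 / 2} : Set ℝ).indicator (fun _ ↦ 1 / 2) q := by
  simp only [hthr, indicator_apply, mem_Ioi, mem_singleton_iff]
  split_ifs <;> linarith

lemma Vinf_eq_integral_hthr (π : Measure ℝ) [IsFiniteMeasure π] (hπ : π (Ioi 1) = 0) :
    Vinf π = ∫ q, hthr q ∂π := by
  have hIoc : π (Ioc (1 / 2) 1) = π (Ioi (1 / 2)) := by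
    rw [← Ioc_union_Ioi_eq_Ioi (by norm_num : (1 / 2 : ℝ) ≤ 1)]
    exact (measure_congr (union_ae_eq_left_of_ae_eq_empty (ae_eq_empty.mpr hπ))).symm
  rw [Vinf, hIoc]
  simp_rw [hthr_eq_indicator]
  rw [integral_add ((integrable_const _).indicator measurableSet_Ioi)
      ((integrable_const _).indicator (measurableSet_singleton _)),
    integral_indicator_const _ measurableSet_Ioi,
    integral_indicator_const _ (measurableSet_singleton _)]
  simp [measureReal_def, mul_comm]

lemma Vinf_le_min_of_mem_momentClass {μ ν : ℝ} {π : Measure ℝ} (hπ : π ∈ momentClass μ ν) :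
    Vinf π ≤ min 1 (3 * μ - 2 * ν) := by
  obtain ⟨hprob, hsupp, hμ, hν⟩ := hπ
  have hae : ∀ᵐ x ∂π, x ∈ Icc (0 : ℝ) 1 := hsupp
  have hid : Integrable (fun x : ℝ ↦ x) π := .of_ae_mem_isCompact isCompact_Icc hae (by fun_prop)
  have hsq : Integrable (fun x : ℝ ↦ x ^ 2) π :=
    .of_ae_mem_isCompact isCompact_Icc hae (by fun_prop)
  rw [Vinf_eq_integral_hthr π (measure_mono_null
    (show Ioi 1 ⊆ (Icc 0 1)ᶜ from fun _ hx h ↦ (mem_Ioi.mp hx).not_ge h.2) hsupp)]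
  refine le_min ?_ ?_
  · calc ∫ q, hthr q ∂π ≤ ∫ _, (1 : ℝ) ∂π :=
          integral_mono_of_nonneg (ae_of_all _ hthr_nonneg) (integrable_const 1)
            (ae_of_all _ hthr_le_one)
      _ = 1 := by simp
  · calc ∫ q, hthr q ∂π ≤ ∫ q, 3 * q - 2 * q ^ 2 ∂π :=
          integral_mono_of_nonneg (ae_of_all _ hthr_nonneg)
            ((hid.const_mul 3).sub (hsq.const_mul 2))
            (hae.mono fun _ ↦ hthr_le_three_mul_sub_two_mul_sq)
      _ = 3 * μ - 2 * ν := by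
          rw [integral_sub (hid.const_mul 3) (hsq.const_mul 2), integral_const_mul,
            integral_const_mul, hμ, hν]

noncomputable def threePoint (p q r t : ℝ) : Measure ℝ :=
  ENNReal.ofReal p • .dirac 0 + ENNReal.ofReal q • .dirac t + ENNReal.ofReal r • .dirac 1

lemma integral_threePoint (f : ℝ → ℝ) {p q r : ℝ} (hp : 0 ≤ p) (hq : 0 ≤ q) (hr : 0 ≤ r)
    (t : ℝ) : ∫ x, f x ∂threePoint p q r t = p * f 0 + q * f t + r * f 1 := by
  have hint : ∀ (c a : ℝ), Integrable f (ENNReal.ofReal c • .dirac a) := fun c a ↦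
    (integrable_dirac enorm_lt_top).smul_measure ENNReal.ofReal_ne_top
  rw [threePoint, integral_add_measure ((hint _ _).add_measure (hint _ _)) (hint _ _),
    integral_add_measure (hint _ _) (hint _ _)]
  simp [hp, hq, hr]

lemma threePoint_mem_momentClass {p q r : ℝ} (hp : 0 ≤ p) (hq : 0 ≤ q) (hr : 0 ≤ r)
    (hsum : p + q + r = 1) {t : ℝ} (ht : t ∈ Icc (0 : ℝ) 1) :
    threePoint p q r t ∈ momentClass (q * t + r) (q * t ^ 2 + r) := by
  refine ⟨⟨?_⟩, ?_, ?_, ?_⟩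
  · simp [threePoint, ← ENNReal.ofReal_add, hp, hq, hr, add_nonneg, hsum]
  · simp [threePoint, Measure.dirac_apply', ht]
  · simp [integral_threePoint _ hp hq hr]
  · simp [integral_threePoint _ hp hq hr]

lemma Vinf_threePoint {p q r : ℝ} (hp : 0 ≤ p) (hq : 0 ≤ q) (hr : 0 ≤ r) {t : ℝ}
    (ht : t ∈ Ioc (1 / 2 : ℝ) 1) : Vinf (threePoint p q r t) = q + r := by
  have : IsFiniteMeasure (threePoint p q r t) := ⟨by simp [threePoint]⟩
  rw [Vinf_eq_integral_hthr _ (by simp [threePoint, Measure.dirac_apply', ht.2]),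
    integral_threePoint _ hp hq hr, hthr_of_lt_half (by norm_num), hthr_of_half_lt ht.1,
    hthr_of_half_lt (by norm_num)]
  ring

lemma exists_mem_momentClass_Vinf_eq {μ ν t : ℝ} (ht : t ∈ Ioo (1 / 2 : ℝ) 1)
    (hμt : μ * t ≤ ν) (hνμ : ν ≤ μ) (hmass : μ - ν ≤ t * (1 - μ)) :
    ∃ π ∈ momentClass μ ν, Vinf π = μ + (μ - ν) / t := by
  obtain ⟨ht0, ht1⟩ := ht
  have htpos : 0 < t := by linarith
  have h1t : 0 < 1 - t := by linarith
  set q := (μ - ν) / (t * (1 - t)) with hq_def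
  set r := (ν - μ * t) / (1 - t) with hr_def
  have hq : 0 ≤ q := div_nonneg (by linarith) (by positivity)
  have hr : 0 ≤ r := div_nonneg (by linarith) h1t.le
  have hqr : q + r = μ + (μ - ν) / t := by
    rw [hq_def, hr_def]; field_simp; ring
  have hp : 0 ≤ 1 - q - r := by
    rw [sub_sub, hqr, ← sub_sub, sub_nonneg, div_le_iff₀ htpos]
    linarith
  have hmean : q * t + r = μ := by
    rw [hq_def, hr_def]; field_simp; ring
  have hsq : q * t ^ 2 + r = ν := by
    rw [hq_def, hr_def]; field_simp; ring
  refine ⟨threePoint (1 - q - r) q r t, ?_, ?_⟩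
  · rw [← hmean, ← hsq]
    exact threePoint_mem_momentClass hp hq hr (by ring) ⟨htpos.le, ht1.le⟩
  · rw [Vinf_threePoint hp hq hr ⟨ht0, ht1.le⟩, hqr]

lemma one_mem_image_Vinf {μ ν : ℝ} (hμ1 : μ ≤ 1) (hμν : μ ^ 2 ≤ ν) (hνμ : ν ≤ μ)
    (h : 1 < 3 * μ - 2 * ν) : 1 ∈ Vinf '' momentClass μ ν := by
  have h1μ : 0 < 1 - μ := by nlinarith
  set t := (μ - ν) / (1 - μ)
  have ht : t ∈ Ioo (1 / 2 : ℝ) 1 := by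
    constructor
    · rw [lt_div_iff₀ h1μ]; linarith
    · rw [div_lt_one h1μ]; nlinarith
  have hmass : μ - ν = t * (1 - μ) := (div_mul_cancel₀ _ h1μ.ne').symm
  obtain ⟨π, hπ, hV⟩ := exists_mem_momentClass_Vinf_eq ht
    (by rw [← mul_le_mul_iff_of_pos_right h1μ, mul_assoc, ← hmass]; nlinarith) hνμ hmass.le
  refine ⟨π, hπ, ?_⟩
  rw [hV, hmass, mul_div_cancel_left₀ _ (by linarith [ht.1] : t ≠ 0)]
  ring

lemma three_mul_sub_two_mul_mem_closure_image_Vinf {μ ν : ℝ} (hμν : μ / 2 < ν) (hνμ : ν ≤ μ)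
    (h : 3 * μ - 2 * ν ≤ 1) : 3 * μ - 2 * ν ∈ closure (Vinf '' momentClass μ ν) := by
  have hμ : 0 < μ := by linarith
  have hlim : Tendsto (fun t ↦ μ + (μ - ν) / t) (𝓝[>] (1 / 2)) (𝓝 (μ + (μ - ν) / (1 / 2))) :=
    (continuousAt_const.add (continuousAt_const.div continuousAt_id (by norm_num))).tendsto
      |>.mono_left nhdsWithin_le_nhds
  rw [show μ + (μ - ν) / (1 / 2) = 3 * μ - 2 * ν by ring] at hlim
  refine mem_closure_of_tendsto hlim ?_
  have hhalf : 1 / 2 < min 1 (ν / μ) := lt_min (by norm_num) (by rw [lt_div_iff₀ hμ]; linarith)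
  filter_upwards [Ioo_mem_nhdsGT hhalf] with t ⟨ht0, ht1⟩
  exact exists_mem_momentClass_Vinf_eq ⟨ht0, ht1.trans_le (min_le_left _ _)⟩
    ((lt_div_iff₀' hμ).mp (ht1.trans_le (min_le_right _ _))).le hνμ (by nlinarith)

/-- **Linear endpoint branch.** The quadratic `ψ₀(q) = 3q − 2q²` dominates the threshold
function `h` on `[0,1]`.  Consequently every probability measure `π` on `[0,1]` with first
moment `μ` and second moment `ν` has `V_∞(π) ≤ min{1, 3μ − 2ν}`; and for every feasible
`(μ,ν)` with `μ > 1/2` or `ν > μ/2`, this bound is sharp: `min{1, 3μ − 2ν}` is the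
supremum of `V_∞` over the two-moment class `M(μ,ν)`. -/
theorem endpoint_linear_branch :
    (∀ q ∈ Set.Icc (0 : ℝ) 1, hthr q ≤ 3 * q - 2 * q ^ 2) ∧
    (∀ (μ ν : ℝ), ∀ π ∈ momentClass μ ν, Vinf π ≤ min 1 (3 * μ - 2 * ν)) ∧
    (∀ μ ν : ℝ, 0 ≤ μ → μ ≤ 1 → μ ^ 2 ≤ ν → ν ≤ μ → (1 / 2 < μ ∨ μ / 2 < ν) →
      IsLUB {x | ∃ π ∈ momentClass μ ν, Vinf π = x} (min 1 (3 * μ - 2 * ν))) := by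
  refine ⟨fun q hq ↦ hthr_le_three_mul_sub_two_mul_sq hq,
    fun μ ν π hπ ↦ Vinf_le_min_of_mem_momentClass hπ, fun μ ν _ hμ1 hμν hνμ hbranch ↦ ?_⟩
  have hν : μ / 2 < ν := hbranch.elim (fun h ↦ by nlinarith) id
  have hub : min 1 (3 * μ - 2 * ν) ∈ upperBounds (Vinf '' momentClass μ ν) := by
    rintro _ ⟨π, hπ, rfl⟩
    exact Vinf_le_min_of_mem_momentClass hπ
  refine isLUB_of_mem_closure hub ?_
  rcases le_or_gt (3 * μ - 2 * ν) 1 with h | h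
  · rw [min_eq_right h]
    exact three_mul_sub_two_mul_mem_closure_image_Vinf hν hνμ h
  · rw [min_eq_left h.le]
    exact subset_closure (one_mem_image_Vinf hμ1 hμν hνμ h)
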